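/- In the normed space ℓ_p² = (ℝ², ‖·‖_p) with 2 < p < ∞, consider the unit vectors a = (−1, 0), b = (2^{−1/p}, 2^{−1/p}), c = (2^{−1/p}, −2^{−1/p}), and the triangle ABC with vertices A = (2^{1−1/p}, 0), B = (−1, −1−2^{1−1/p}), C = (−1, 1+2^{1−1/p}), whose edges BC, CA, AB are tangent to the unit sphere at a, b, c respectively. Then the vector |△OAB|·c + |△OBC|·a + |△OCA|·b equals (1 + 2^{1−1/p}) · (2^{1−2/p} − 1, 0), which is nonzero; here |△OXY| denotes the Lebesgue area of the triangle with vertices O, X, Y. -/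

import Mathlib

/-!
With `t = 2^{1-1/p}` the triangle is `A = (t, 0)`, `B = (-1, -1-t)`, `C = (-1, 1+t)`, so
`|△OBC| = 1 + t` and `|△OAB| = |△OCA| = t(1+t)/2`. The second coordinates of `b` and `c` cancel in
the weighted sum, which leaves `(1+t)(t·2^{-1/p} - 1) = (1+t)(2^{1-2/p} - 1)` in the first one;
this is nonzero because `1 - 2/p > 0`.
-/

/-- Twice the signless area of the triangle with vertices `O`, `X`, `Y`. -/
noncomputable def triAreaO (X Y : ℝ × ℝ) : ℝ := |X.1 * Y.2 - X.2 * Y.1| / 2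

section TangentTriangle

variable {t : ℝ}

lemma triAreaO_AB (ht : 0 ≤ t) : triAreaO (t, 0) (-1, -1 - t) = t * (1 + t) / 2 := by
  rw [triAreaO, abs_of_nonpos (by nlinarith)]
  ring

lemma triAreaO_BC (ht : 0 ≤ t) : triAreaO (-1, -1 - t) (-1, 1 + t) = 1 + t := by
  rw [triAreaO, abs_of_nonpos (by linarith)]
  ring

lemma triAreaO_CA (ht : 0 ≤ t) : triAreaO (-1, 1 + t) (t, 0) = t * (1 + t) / 2 := by
  rw [triAreaO, abs_of_nonpos (by nlinarith)]
  ring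

lemma triAreaO_weighted_sum (ht : 0 ≤ t) (u : ℝ) :
    triAreaO (t, 0) (-1, -1 - t) • (u, -u) + triAreaO (-1, -1 - t) (-1, 1 + t) • ((-1, 0) : ℝ × ℝ)
      + triAreaO (-1, 1 + t) (t, 0) • (u, u) = (1 + t) • ((t * u - 1, 0) : ℝ × ℝ) := by
  rw [triAreaO_AB ht, triAreaO_BC ht, triAreaO_CA ht]
  ext <;> simp only [Prod.fst_add, Prod.snd_add, Prod.smul_fst, Prod.smul_snd, smul_eq_mul] <;> ring

end TangentTriangle

lemma one_lt_two_rpow_one_sub_two_div {p : ℝ} (hp : 2 < p) : 1 < (2 : ℝ) ^ (1 - 2 / p) :=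
  Real.one_lt_rpow one_lt_two (sub_pos.mpr ((div_lt_one (by linarith)).mpr hp))

/-- In `ℓ_p² = (ℝ², ‖·‖_p)` with `2 < p < ∞`, for the triangle `ABC`
circumscribing the unit sphere with tangency points `a, b, c`, the vector
`|△OAB|·c + |△OBC|·a + |△OCA|·b` equals
`(1 + 2^{1-1/p}) • (2^{1-2/p} - 1, 0) ≠ 0`. -/
theorem stmt_7 (p : ℝ) (hp : 2 < p) :
    let a : ℝ × ℝ := (-1, 0)
    let b : ℝ × ℝ := ((2 : ℝ) ^ (-1 / p), (2 : ℝ) ^ (-1 / p))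
    let c : ℝ × ℝ := ((2 : ℝ) ^ (-1 / p), -((2 : ℝ) ^ (-1 / p)))
    let A : ℝ × ℝ := ((2 : ℝ) ^ (1 - 1 / p), 0)
    let B : ℝ × ℝ := (-1, -1 - (2 : ℝ) ^ (1 - 1 / p))
    let C : ℝ × ℝ := (-1, 1 + (2 : ℝ) ^ (1 - 1 / p))
    triAreaO A B • c + triAreaO B C • a + triAreaO C A • b =
      (1 + (2 : ℝ) ^ (1 - 1 / p)) • ((((2 : ℝ) ^ (1 - 2 / p) - 1 : ℝ), (0 : ℝ)) : ℝ × ℝ) ∧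
    (1 + (2 : ℝ) ^ (1 - 1 / p)) • ((((2 : ℝ) ^ (1 - 2 / p) - 1 : ℝ), (0 : ℝ)) : ℝ × ℝ) ≠ 0 := by
  dsimp only
  have ht : (0 : ℝ) ≤ 2 ^ (1 - 1 / p) := by positivity
  have htu : (2 : ℝ) ^ (1 - 1 / p) * 2 ^ (-1 / p) = 2 ^ (1 - 2 / p) := by
    rw [← Real.rpow_add two_pos]
    ring_nf
  refine ⟨?_, smul_ne_zero (by positivity) ?_⟩
  · rw [← htu]
    exact triAreaO_weighted_sum ht _
  · simpa [sub_eq_zero] using (one_lt_two_rpow_one_sub_two_div hp).ne'
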